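/- Let (M,g) be a complete Riemannian manifold and X a smooth vector field on M with uniformly bounded covariant derivative, i.e., C := sup_{p∈M} ‖∇X(p)‖_g < ∞, where ‖∇X(p)‖_g = sup_{0≠Y_p∈T_pM} ‖∇_{Y_p}X‖_g/‖Y_p‖_g. Then X is complete. -/

import Mathlib

/-!
Along an integral curve `γ` of `X` the energy `e = g(X, X)` satisfies
`|e'| = 2 |g(∇_X X, X)| ≤ 2 C e`, so by Gronwall `|X(γ t)| ≤ |X(γ 0)| e^{C |t|}`. Hence on a
time interval `(-a, a)` the curve has length at most `a |X(γ 0)| e^{C a}` and stays in a closed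
metric ball, which is compact by Hopf–Rinow. Integral curves through the points of a compact set
exist for a uniform time, so an integral curve defined on `(-a, a)` can always be extended a
fixed amount beyond `±a`. Hence the integral curve through any point is defined on all of `ℝ`.
-/

open scoped Manifold Topology NNReal ContDiff
open Set Function Metric Real

namespace IsPicardLindelof

variable {E : Type*} [NormedAddCommGroup E] [NormedSpace ℝ E] [CompleteSpace E]
  {f : ℝ → E → E} {tmin tmax : ℝ} {t₀ : Icc tmin tmax} {x₀ x : E} {a r L K : ℝ≥0}

theorem exists_eq_forall_mem_Icc_mem_closedBall_hasDerivWithinAt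
    (hf : IsPicardLindelof f t₀ x₀ a r L K) (hx : x ∈ closedBall x₀ r) :
    ∃ α : ℝ → E, α t₀ = x ∧ ∀ t ∈ Icc tmin tmax,
      α t ∈ closedBall x₀ a ∧ HasDerivWithinAt α (f t (α t)) (Icc tmin tmax) t := by
  obtain ⟨α, hα⟩ := ODE.FunSpace.exists_isFixedPt_next hf hx
  refine ⟨α.compProj, by rw [ODE.FunSpace.compProj_val, ← hα, ODE.FunSpace.next_apply₀],
    fun t ht ↦ ⟨α.compProj_mem_closedBall hf.mul_max_le, ?_⟩⟩
  apply ODE.hasDerivWithinAt_picard_Icc t₀.2 hf.continuousOn_uncurry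
    α.continuous_compProj.continuousOn (fun _ _ ↦ α.compProj_mem_closedBall hf.mul_max_le)
    x ht |>.congr_of_mem _ ht
  intro t' ht'
  nth_rw 1 [← hα]
  rw [ODE.FunSpace.compProj_of_mem ht', ODE.FunSpace.next_apply]

end IsPicardLindelof

theorem ContDiffAt.exists_forall_mem_closedBall_exists_forall_mem_Ioo_mem_hasDerivAt
    {E : Type*} [NormedAddCommGroup E] [NormedSpace ℝ E] [CompleteSpace E]
    {f : E → E} {x₀ : E} (hf : ContDiffAt ℝ 1 f x₀) {s : Set E} (hs : s ∈ 𝓝 x₀) :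
    ∃ r > (0 : ℝ), ∃ ε > (0 : ℝ), ∀ x ∈ closedBall x₀ r, ∃ α : ℝ → E, α 0 = x ∧
      ∀ t ∈ Ioo (-ε) ε, α t ∈ s ∧ HasDerivAt α (f (α t)) t := by
  obtain ⟨ε, hε, a, r, L, K, hr, hpl⟩ := IsPicardLindelof.of_contDiffAt_one hf
  obtain ⟨ρ, hρ, hρs⟩ := nhds_basis_closedBall.mem_iff.mp hs
  have hra : r ≤ a := by
    have hmul := (hpl 0).mul_max_le
    have hnn : (0 : ℝ) ≤ L * max (0 + ε - 0) (0 - (0 - ε)) :=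
      mul_nonneg L.2 (le_max_of_le_left (by linarith))
    exact_mod_cast (show (r : ℝ) ≤ a by linarith)
  set a' : ℝ≥0 := min a ⟨ρ, hρ.le⟩
  have ha' : 0 < a' := lt_min (hr.trans_le hra) hρ
  obtain ⟨ε', hε', hpl'⟩ := (hpl 0).exists_shrink_radius hε (min_le_left a _)
    (half_lt_self ha')
  refine ⟨a' / 2, by positivity, ε', hε', fun x hx ↦ ?_⟩
  obtain ⟨α, hα0, hα⟩ := hpl'.exists_eq_forall_mem_Icc_mem_closedBall_hasDerivWithinAt hx
  refine ⟨α, hα0, fun t ht ↦ ?_⟩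
  have ht' : t ∈ Ioo (0 - ε') (0 + ε') := by simpa using ht
  obtain ⟨hmem, hderiv⟩ := hα t (Ioo_subset_Icc_self ht')
  exact ⟨hρs (closedBall_subset_closedBall (min_le_right _ _) hmem),
    hderiv.hasDerivAt (Icc_mem_nhds ht'.1 ht'.2)⟩

theorem le_mul_exp_abs_sub_of_abs_hasDerivAt_le {f f' φ φ' : ℝ → ℝ}
    (hf : ∀ s, HasDerivAt f (f' s) s) (hφ : ∀ s, HasDerivAt φ (φ' s) s)
    (hf' : ∀ s, |f' s| ≤ φ' s * f s) (hf0 : 0 ≤ f 0) (s : ℝ) :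
    f s ≤ f 0 * exp |φ s - φ 0| := by
  have hanti : Antitone fun u ↦ f u * exp (-φ u) :=
    antitone_of_hasDerivAt_nonpos (fun u ↦ (hf u).mul (hφ u).neg.exp) fun u ↦ by
      have h : f' u - φ' u * f u ≤ 0 := by linarith [le_abs_self (f' u), hf' u]
      simp only [Pi.neg_apply, Pi.zero_apply]
      linarith [mul_nonpos_of_nonpos_of_nonneg h (exp_pos (-φ u)).le]
  have hmono : Monotone fun u ↦ f u * exp (φ u) :=
    monotone_of_hasDerivAt_nonneg (fun u ↦ (hf u).mul (hφ u).exp) fun u ↦ by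
      have h : 0 ≤ f' u + φ' u * f u := by linarith [neg_abs_le (f' u), hf' u]
      simp only [Pi.zero_apply]
      linarith [mul_nonneg h (exp_pos (φ u)).le]
  rcases le_total 0 s with hs | hs
  · calc f s = f s * exp (-φ s) * exp (φ s) := by rw [mul_assoc, ← exp_add]; simp
      _ ≤ f 0 * exp (-φ 0) * exp (φ s) := mul_le_mul_of_nonneg_right (hanti hs) (exp_pos _).le
      _ = f 0 * exp (φ s - φ 0) := by rw [mul_assoc, ← exp_add]; ring_nf
      _ ≤ f 0 * exp |φ s - φ 0| := by gcongr; exact le_abs_self _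
  · calc f s = f s * exp (φ s) * exp (-φ s) := by rw [mul_assoc, ← exp_add]; simp
      _ ≤ f 0 * exp (φ 0) * exp (-φ s) := mul_le_mul_of_nonneg_right (hmono hs) (exp_pos _).le
      _ = f 0 * exp (-(φ s - φ 0)) := by rw [mul_assoc, ← exp_add]; ring_nf
      _ ≤ f 0 * exp |φ s - φ 0| := by gcongr; exact neg_le_abs _

noncomputable def scaledArctan (a s : ℝ) : ℝ := 2 * a / π * arctan s

theorem hasDerivAt_scaledArctan (a s : ℝ) :
    HasDerivAt (scaledArctan a) (2 * a / π * (1 / (1 + s ^ 2))) s :=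
  (hasDerivAt_arctan s).const_mul _

theorem contDiff_scaledArctan (a : ℝ) : ContDiff ℝ ∞ (scaledArctan a) :=
  contDiff_const.mul contDiff_arctan

@[simp]
theorem scaledArctan_zero (a : ℝ) : scaledArctan a 0 = 0 := by
  simp [scaledArctan]

theorem monotone_scaledArctan {a : ℝ} (ha : 0 ≤ a) : Monotone (scaledArctan a) :=
  fun _ _ h ↦ mul_le_mul_of_nonneg_left (arctan_strictMono.monotone h) (by positivity)

theorem scaledArctan_mem_Ioo {a : ℝ} (ha : 0 < a) (s : ℝ) : scaledArctan a s ∈ Ioo (-a) a := by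
  have h : 0 < 2 * a / π := by positivity
  have h' : 2 * a / π * (π / 2) = a := by field_simp
  rw [scaledArctan]
  constructor
  · nlinarith [neg_pi_div_two_lt_arctan s]
  · nlinarith [arctan_lt_pi_div_two s]

theorem Ioo_subset_range_scaledArctan {a : ℝ} (ha : 0 < a) :
    Ioo (-a) a ⊆ range (scaledArctan a) := by
  intro t ht
  have hθ : t * (π / (2 * a)) ∈ Ioo (-(π / 2)) (π / 2) := by
    have : π / (2 * a) * a = π / 2 := by field_simp
    constructor <;> nlinarith [ht.1, ht.2, pi_pos, div_pos pi_pos (by positivity : 0 < 2 * a)]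
  refine ⟨tan (t * (π / (2 * a))), ?_⟩
  rw [scaledArctan, arctan_tan hθ.1 hθ.2]
  field_simp

namespace LinearMap.BilinForm

variable {F : Type*} [AddCommGroup F] [Module ℝ F] (B : LinearMap.BilinForm ℝ F)

theorem sqrt_apply_smul_smul (c : ℝ) (x : F) :
    √(B (c • x) (c • x)) = |c| * √(B x x) := by
  simp only [map_smul, LinearMap.smul_apply, smul_eq_mul]
  rw [← mul_assoc, ← sq, sqrt_mul (sq_nonneg c), sqrt_sq_eq_abs]

theorem abs_apply_map_le_mul_apply_self (hs : ∀ x, 0 ≤ B x x) (hB : ∀ x y, B x y = B y x)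
    (A : F →ₗ[ℝ] F) {C : ℝ} (hA : ∀ x, √(B (A x) (A x)) ≤ C * √(B x x)) (x : F) :
    |B (A x) x| ≤ C * B x x := by
  have hcs : B (A x) x ^ 2 ≤ B (A x) (A x) * B x x := by
    rw [sq]; nth_rw 2 [hB]
    exact B.apply_mul_apply_le_of_forall_zero_le hs _ _
  calc |B (A x) x| ≤ √(B (A x) (A x)) * √(B x x) := by
        rw [← sqrt_mul (hs _)]; exact abs_le_sqrt hcs
    _ ≤ C * √(B x x) * √(B x x) := by gcongr; exact hA x
    _ = C * B x x := by rw [mul_assoc, mul_self_sqrt (hs x)]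

end LinearMap.BilinForm

section IntegralCurve

variable {E : Type*} [NormedAddCommGroup E] [NormedSpace ℝ E]
  {H : Type*} [TopologicalSpace H] {I : ModelWithCorners ℝ E H}
  {M : Type*} [TopologicalSpace M] [ChartedSpace H M] {v : (x : M) → TangentSpace I x}

theorem IsMIntegralCurveOn.hasMFDerivAt_comp {γ : ℝ → M} {s : Set ℝ}
    (hγ : IsMIntegralCurveOn γ v s) {σ : ℝ → ℝ} {σ' t : ℝ} (hσ : HasDerivAt σ σ' t)
    (hs : s ∈ 𝓝 (σ t)) :
    HasMFDerivAt 𝓘(ℝ, ℝ) I (γ ∘ σ) t ((1 : ℝ →L[ℝ] ℝ).smulRight (σ' • v (γ (σ t)))) := by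
  refine ((hγ _ (mem_of_mem_nhds hs)).hasMFDerivAt hs).comp t hσ.hasFDerivAt.hasMFDerivAt
    |>.congr_mfderiv ?_
  ext
  show (1 * σ') • v (γ (σ t)) = (1 : ℝ) • σ' • v (γ (σ t))
  rw [one_mul, one_smul]

theorem IsMIntegralCurveOn.contMDiffOn [CompleteSpace E] [I.Boundaryless] [IsManifold I ∞ M]
    (hv : CMDiff ∞ (fun x ↦ (⟨x, v x⟩ : TangentBundle I M))) {γ : ℝ → M} {s : Set ℝ}
    (hs : IsOpen s) (hγ : IsMIntegralCurveOn γ v s) : CMDiff[s] ∞ γ := by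
  intro t₀ ht₀
  refine ContMDiffAt.contMDiffWithinAt ?_
  set p := γ t₀
  have hv' := contDiff_snd.comp_contDiffOn ((contMDiff_iff.mp hv).2 p ⟨p, v p⟩)
  obtain ⟨δ, hδ, hδs⟩ := Metric.isOpen_iff.mp (hγ.continuousOn.isOpen_inter_preimage
    hs ((isOpen_extChartAt_source (I := I) p).inter (hv.continuous.isOpen_preimage _
      (isOpen_extChartAt_source (I := I.tangent) ⟨p, v p⟩)))) t₀
    ⟨ht₀, mem_extChartAt_source (I := I) p, mem_extChartAt_source (I := I.tangent) _⟩
  have hIcc : Icc (t₀ - δ / 2) (t₀ + δ / 2) ⊆ s ∩ γ ⁻¹' ((extChartAt I p).source ∩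
      (fun x ↦ (⟨x, v x⟩ : TangentBundle I M)) ⁻¹' (extChartAt I.tangent ⟨p, v p⟩).source) := by
    rw [← Real.closedBall_eq_Icc]
    exact (closedBall_subset_ball (half_lt_self hδ)).trans hδs
  have hf : ContDiffOn ℝ ∞ (extChartAt I p ∘ γ) (Icc (t₀ - δ / 2) (t₀ + δ / 2)) := by
    refine ODE.contDiffOn_enat_Icc_of_hasDerivWithinAt (f := fun _ ↦ _)
      (hv'.comp contDiff_snd.contDiffOn fun _ h ↦ h.2) (fun t ht ↦ ?_) fun t ht ↦ ?_
    · have h := (hγ.hasDerivWithinAt (t₀ := t₀) (hIcc ht).1 (hIcc ht).2.1).hasDerivAt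
        (hs.mem_nhds (hIcc ht).1)
      convert h.hasDerivWithinAt using 1
      simp only [comp_apply]
      rw [PartialEquiv.left_inv _ (hIcc ht).2.1]
      -- the fibre coordinate of a tangent bundle chart is a `tangentCoordChange`
      rfl
    · exact ⟨(extChartAt I p).map_source (hIcc ht).2.1, by
        simpa only [mem_preimage, comp_apply, PartialEquiv.left_inv _ (hIcc ht).2.1]
          using (hIcc ht).2.2⟩
  have hsymm : CMDiffAt ∞ (extChartAt I p).symm (extChartAt I p p) :=
    (contMDiffOn_extChartAt_symm p).contMDiffAt (extChartAt_target_mem_nhds p)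
  refine (hsymm.comp t₀ (hf.contDiffAt (Icc_mem_nhds (by linarith) (by linarith))).contMDiffAt)
    |>.congr_of_eventuallyEq ?_
  filter_upwards [ball_mem_nhds t₀ hδ] with t ht
  exact ((extChartAt I p).left_inv (hδs ht).2.1).symm

variable [IsManifold I 1 M] {x₀ : M}

theorem hasMFDerivAt_extChartAt_symm_comp {f : ℝ → E} {t : ℝ} {w : E}
    (hft : f t ∈ interior (extChartAt I x₀).target)
    (hf : HasDerivAt f (tangentCoordChange I ((extChartAt I x₀).symm (f t)) x₀
      ((extChartAt I x₀).symm (f t)) w) t) :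
    HasMFDerivAt 𝓘(ℝ, ℝ) I ((extChartAt I x₀).symm ∘ f) t ((1 : ℝ →L[ℝ] ℝ).smulRight w) := by
  let xₜ : M := (extChartAt I x₀).symm (f t)
  have hft' := interior_subset hft
  have hft1 := (extChartAt I x₀).map_target hft'
  have hft2 := mem_extChartAt_source (I := I) xₜ
  refine ⟨(continuousAt_extChartAt_symm'' hft').comp hf.continuousAt, ?_⟩
  suffices h : HasDerivAt ((extChartAt I xₜ ∘ (extChartAt I x₀).symm) ∘ f) w t from
    (h.hasDerivWithinAt (s := range 𝓘(ℝ, ℝ))).hasFDerivWithinAt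
  rw [← tangentCoordChange_self (I := I) (x := xₜ) (z := xₜ) (v := w) hft2,
    ← tangentCoordChange_comp (x := x₀) ⟨⟨hft2, hft1⟩, hft2⟩]
  apply HasFDerivAt.comp_hasDerivAt _ _ hf
  apply HasFDerivWithinAt.hasFDerivAt (s := range I) _ <|
    mem_nhds_iff.mpr ⟨interior (extChartAt I x₀).target,
      subset_trans interior_subset (extChartAt_target_subset_range ..), isOpen_interior, hft⟩
  rw [← (extChartAt I x₀).right_inv hft']
  exact hasFDerivWithinAt_tangentCoordChange ⟨hft1, hft2⟩

theorem exists_pos_eventually_exists_isMIntegralCurveOn_Ioo [CompleteSpace E]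
    (hv : CMDiffAt 1 (fun x ↦ (⟨x, v x⟩ : TangentBundle I M)) x₀) (hx : I.IsInteriorPoint x₀) :
    ∃ ε > (0 : ℝ), ∀ᶠ x in 𝓝 x₀, ∃ γ : ℝ → M, γ 0 = x ∧ IsMIntegralCurveOn γ v (Ioo (-ε) ε) := by
  rw [contMDiffAt_iff] at hv
  obtain ⟨r, hr, ε, hε, hflow⟩ := hv.2.contDiffAt (range_mem_nhds_isInteriorPoint hx)
    |>.snd.exists_forall_mem_closedBall_exists_forall_mem_Ioo_mem_hasDerivAt
      (isOpen_interior.mem_nhds (I.isInteriorPoint_iff.mp hx))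
  refine ⟨ε, hε, ?_⟩
  filter_upwards [(continuousAt_extChartAt x₀).preimage_mem_nhds
    (closedBall_mem_nhds (extChartAt I x₀ x₀) hr), extChartAt_source_mem_nhds (I := I) x₀]
    with x hxr hxs
  obtain ⟨α, hα0, hα⟩ := hflow _ hxr
  refine ⟨(extChartAt I x₀).symm ∘ α, by rw [comp_apply, hα0, PartialEquiv.left_inv _ hxs],
    fun t ht ↦ ?_⟩
  exact (hasMFDerivAt_extChartAt_symm_comp (hα t ht).1 (hα t ht).2).hasMFDerivWithinAt

theorem IsCompact.exists_pos_forall_exists_isMIntegralCurveOn_Ioo [CompleteSpace E]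
    [BoundarylessManifold I M] (hv : CMDiff 1 (fun x ↦ (⟨x, v x⟩ : TangentBundle I M)))
    {K : Set M} (hK : IsCompact K) :
    ∃ ε > (0 : ℝ), ∀ x ∈ K, ∃ γ : ℝ → M, γ 0 = x ∧ IsMIntegralCurveOn γ v (Ioo (-ε) ε) := by
  choose ε hε hU using fun x : M ↦ exists_pos_eventually_exists_isMIntegralCurveOn_Ioo (hv x)
    BoundarylessManifold.isInteriorPoint
  obtain ⟨s, -, hcover⟩ := hK.elim_nhds_subcover _ fun x _ ↦ hU x
  rcases s.eq_empty_or_nonempty with rfl | hs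
  · exact ⟨1, one_pos, fun x hx ↦ by simpa using hcover hx⟩
  refine ⟨s.inf' hs ε, (Finset.lt_inf'_iff hs).mpr fun x _ ↦ hε x, fun x hx ↦ ?_⟩
  obtain ⟨y, hys, γ, hγ0, hγ⟩ := mem_iUnion₂.mp (hcover hx)
  exact ⟨γ, hγ0, hγ.mono <| Ioo_subset_Ioo (neg_le_neg <| s.inf'_le ε hys) (s.inf'_le ε hys)⟩

variable [T2Space M] [BoundarylessManifold I M]

theorem IsMIntegralCurveOn.exists_isMIntegralCurveOn_Ioo_add_half
    (hv : CMDiff 1 (fun x ↦ (⟨x, v x⟩ : TangentBundle I M)))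
    {γ : ℝ → M} {a ε : ℝ} (hγ : IsMIntegralCurveOn γ v (Ioo (-a) a)) (hε : 0 < ε)
    (hεa : ε < 4 * a)
    (hext : ∀ t ∈ Ioo (-a) a,
      ∃ γ' : ℝ → M, γ' 0 = γ t ∧ IsMIntegralCurveOn γ' v (Ioo (-ε) ε)) :
    ∃ γ' : ℝ → M, γ' 0 = γ 0 ∧ IsMIntegralCurveOn γ' v (Ioo (-(a + ε / 2)) (a + ε / 2)) := by
  set t₀ := a - ε / 2 with ht₀def
  have ht₀ : t₀ ∈ Ioo (-a) a := ⟨by linarith, by linarith⟩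
  obtain ⟨γ₁, hγ₁0, hγ₁⟩ := hext (-t₀) ⟨by linarith, by linarith⟩
  obtain ⟨γ₂, hγ₂0, hγ₂⟩ := hext t₀ ht₀
  have hγ₁' := hγ₁.comp_add t₀
  have hγ₂' := hγ₂.comp_add (-t₀)
  change IsMIntegralCurveOn _ v ((· + t₀) ⁻¹' Ioo (-ε) ε) at hγ₁'
  change IsMIntegralCurveOn _ v ((· + -t₀) ⁻¹' Ioo (-ε) ε) at hγ₂'
  rw [preimage_add_const_Ioo] at hγ₁' hγ₂'
  have hleft := isMIntegralCurveOn_piecewise hv hγ hγ₁' (t₀ := -t₀)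
    ⟨⟨by linarith, by linarith⟩, ⟨by linarith, by linarith⟩⟩ (by simp [hγ₁0])
  have hboth := isMIntegralCurveOn_piecewise hv (hleft.mono (s' := Ioo (-(a + ε / 2)) a) ?_)
    hγ₂' (t₀ := t₀) ⟨⟨by linarith, by linarith⟩, ⟨by linarith, by linarith⟩⟩ ?_
  · refine ⟨_, ?_, hboth.mono ?_⟩
    · rw [piecewise_eq_of_mem _ _ _ (show (0 : ℝ) ∈ Ioo (-(a + ε / 2)) a by
          constructor <;> linarith),
        piecewise_eq_of_mem _ _ _ (show (0 : ℝ) ∈ Ioo (-a) a by constructor <;> linarith)]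
    · intro t ht
      by_cases h : t < a
      · exact Or.inl ⟨ht.1, h⟩
      · exact Or.inr ⟨by linarith, by linarith [ht.2]⟩
  · intro t ht
    by_cases h : -a < t
    · exact Or.inl ⟨h, ht.2⟩
    · exact Or.inr ⟨by linarith [ht.1], by linarith⟩
  · rw [piecewise_eq_of_mem _ _ _ ht₀]
    simp [hγ₂0]

theorem exists_isMIntegralCurve_of_forall_mapsTo_isCompact [CompleteSpace E]
    (hv : CMDiff 1 (fun x ↦ (⟨x, v x⟩ : TangentBundle I M))) (x : M)
    (hbound : ∀ T : ℝ, ∃ K : Set M, IsCompact K ∧ ∀ γ : ℝ → M, γ 0 = x → ∀ a ≤ T,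
      IsMIntegralCurveOn γ v (Ioo (-a) a) → MapsTo γ (Ioo (-a) a) K) :
    ∃ γ : ℝ → M, γ 0 = x ∧ IsMIntegralCurve γ v := by
  let S := {a : ℝ | ∃ γ : ℝ → M, γ 0 = x ∧ IsMIntegralCurveOn γ v (Ioo (-a) a)}
  suffices hS : ¬BddAbove S by
    rw [exists_isMIntegralCurve_iff_exists_isMIntegralCurveOn_Ioo hv]
    intro a
    obtain ⟨b, ⟨γ, hγ0, hγ⟩, hab⟩ := not_bddAbove_iff.mp hS a
    exact ⟨γ, hγ0, hγ.mono <| Ioo_subset_Ioo (neg_le_neg hab.le) hab.le⟩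
  intro hS
  obtain ⟨ε₁, hε₁, hε₁S⟩ :=
    isCompact_singleton.exists_pos_forall_exists_isMIntegralCurveOn_Ioo hv
  replace hε₁S : ε₁ ∈ S := hε₁S x rfl
  set A := sSup S
  have hA : 0 < A := hε₁.trans_le (le_csSup hS hε₁S)
  obtain ⟨K, hK, hγK⟩ := hbound A
  obtain ⟨ε₀, hε₀, hloc⟩ := hK.exists_pos_forall_exists_isMIntegralCurveOn_Ioo hv
  set ε := min ε₀ A
  have hε : 0 < ε := lt_min hε₀ hA
  obtain ⟨a, ⟨γ, hγ0, hγ⟩, hAa⟩ := exists_lt_of_lt_csSup ⟨ε₁, hε₁S⟩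
    (show A - ε / 2 < A by linarith)
  have haA : a ≤ A := le_csSup hS ⟨γ, hγ0, hγ⟩
  have hεA : ε ≤ A := min_le_right _ _
  obtain ⟨γ', hγ'0, hγ'⟩ := hγ.exists_isMIntegralCurveOn_Ioo_add_half hv hε (by linarith)
    fun t ht ↦ (hloc (γ t) (hγK γ hγ0 a haA hγ ht)).imp fun γ' h ↦
      ⟨h.1, h.2.mono <| Ioo_subset_Ioo (neg_le_neg <| min_le_left _ _) (min_le_left _ _)⟩
  exact (le_csSup hS ⟨γ', hγ'0.trans hγ0, hγ'⟩).not_gt (by linarith)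

end IntegralCurve

section Riemannian

variable {E : Type*} [NormedAddCommGroup E] [NormedSpace ℝ E]
  {H : Type*} [TopologicalSpace H] {M : Type*} [TopologicalSpace M] [ChartedSpace H M]

def DistLeLength (I : ModelWithCorners ℝ E H) (g : M → E →ₗ[ℝ] E →ₗ[ℝ] ℝ) (d : M → M → ℝ) :
    Prop :=
  ∀ γ : ℝ → M, ContMDiff 𝓘(ℝ, ℝ) I ∞ γ → ∀ a b : ℝ, a ≤ b →
    d (γ a) (γ b) ≤ ∫ t in a..b, √(g (γ t) (mfderiv 𝓘(ℝ, ℝ) I γ t 1) (mfderiv 𝓘(ℝ, ℝ) I γ t 1))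

def IsMetricCompatible (I : ModelWithCorners ℝ E H) (g : M → E →ₗ[ℝ] E →ₗ[ℝ] ℝ) (X : M → E)
    (covX : M → E →ₗ[ℝ] E) : Prop :=
  ∀ γ : ℝ → M, ContMDiff 𝓘(ℝ, ℝ) I ∞ γ → ∀ t : ℝ,
    HasDerivAt (fun s ↦ g (γ s) (X (γ s)) (X (γ s)))
      (2 * g (γ t) (covX (γ t) (mfderiv 𝓘(ℝ, ℝ) I γ t 1)) (X (γ t))) t

variable {I : ModelWithCorners ℝ E H}

theorem energy_le_mul_exp_of_mfderiv_eq_smul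
    (g : M → E →ₗ[ℝ] E →ₗ[ℝ] ℝ) (hgsymm : ∀ q v w, g q v w = g q w v)
    (hgnn : ∀ q v, 0 ≤ g q v v) (X : M → E) (covX : M → E →ₗ[ℝ] E)
    (hcompat : IsMetricCompatible I g X covX)
    {C : ℝ} (hC : ∀ q v, √(g q (covX q v) (covX q v)) ≤ C * √(g q v v))
    {δ : ℝ → M} (hδ : ContMDiff 𝓘(ℝ, ℝ) I ∞ δ) {φ φ' : ℝ → ℝ}
    (hφ : ∀ s, HasDerivAt φ (φ' s) s) (hφ' : ∀ s, 0 ≤ φ' s)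
    (hδ' : ∀ s, mfderiv 𝓘(ℝ, ℝ) I δ s 1 = φ' s • X (δ s)) (s : ℝ) :
    g (δ s) (X (δ s)) (X (δ s)) ≤
      g (δ 0) (X (δ 0)) (X (δ 0)) * exp |2 * C * φ s - 2 * C * φ 0| := by
  refine le_mul_exp_abs_sub_of_abs_hasDerivAt_le (hcompat δ hδ)
    (fun s ↦ (hφ s).const_mul (2 * C)) (fun u ↦ ?_) (hgnn _ _) s
  rw [hδ' u, map_smul, map_smul, LinearMap.smul_apply, smul_eq_mul, abs_mul, abs_mul, abs_two,
    abs_of_nonneg (hφ' u)]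
  have hcs := LinearMap.BilinForm.abs_apply_map_le_mul_apply_self (g (δ u)) (hgnn _) (hgsymm _)
    (covX (δ u)) (hC _) (X (δ u))
  nlinarith [hφ' u]

theorem dist_le_mul_sub_of_mfderiv_eq_smul
    (g : M → E →ₗ[ℝ] E →ₗ[ℝ] ℝ) (d : M → M → ℝ)
    (hdlen : DistLeLength I g d)
    (X : M → E) {δ : ℝ → M} (hδ : ContMDiff 𝓘(ℝ, ℝ) I ∞ δ) {φ φ' : ℝ → ℝ}
    (hφ : ∀ s, HasDerivAt φ (φ' s) s) (hφ'c : Continuous φ') (hφ' : ∀ s, 0 ≤ φ' s)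
    (hδ' : ∀ s, mfderiv 𝓘(ℝ, ℝ) I δ s 1 = φ' s • X (δ s)) {a b B : ℝ} (hab : a ≤ b)
    (hB : ∀ s ∈ Icc a b, √(g (δ s) (X (δ s)) (X (δ s))) ≤ B) :
    d (δ a) (δ b) ≤ B * (φ b - φ a) := by
  have hlen : ∀ s ∈ Icc a b,
      √(g (δ s) (mfderiv 𝓘(ℝ, ℝ) I δ s 1) (mfderiv 𝓘(ℝ, ℝ) I δ s 1)) ≤ φ' s * B := by
    intro s hs
    rw [hδ' s, LinearMap.BilinForm.sqrt_apply_smul_smul, abs_of_nonneg (hφ' s)]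
    exact mul_le_mul_of_nonneg_left (hB s hs) (hφ' s)
  calc d (δ a) (δ b) ≤ _ := hdlen δ hδ a b hab
    _ ≤ ∫ s in a..b, φ' s * B := by
      rw [intervalIntegral.integral_of_le hab, intervalIntegral.integral_of_le hab]
      refine MeasureTheory.integral_mono_of_nonneg (.of_forall fun s ↦ sqrt_nonneg _)
        ((hφ'c.mul continuous_const).integrableOn_Ioc) ?_
      exact MeasureTheory.ae_restrict_of_forall_mem measurableSet_Ioc
        fun s hs ↦ hlen s (Ioc_subset_Icc_self hs)
    _ = B * (φ b - φ a) := by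
      rw [intervalIntegral.integral_mul_const, mul_comm,
        intervalIntegral.integral_eq_sub_of_hasDerivAt (fun s _ ↦ hφ s)
          (hφ'c.intervalIntegrable a b)]

theorem dist_le_of_isMIntegralCurveOn_Ioo [CompleteSpace E] [I.Boundaryless]
    [IsManifold I ∞ M]
    (g : M → E →ₗ[ℝ] E →ₗ[ℝ] ℝ) (hgsymm : ∀ q v w, g q v w = g q w v)
    (hgnn : ∀ q v, 0 ≤ g q v v) (d : M → M → ℝ) (hdsymm : ∀ p q, d p q = d q p)
    (hdlen : DistLeLength I g d)
    (X : (x : M) → TangentSpace I x)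
    (hX : CMDiff ∞ (fun x ↦ (⟨x, X x⟩ : TangentBundle I M))) (covX : M → E →ₗ[ℝ] E)
    (hcompat : IsMetricCompatible I g X covX)
    {C : ℝ} (hC : ∀ q v, √(g q (covX q v) (covX q v)) ≤ C * √(g q v v))
    {γ : ℝ → M} {a : ℝ} (hγ : IsMIntegralCurveOn γ X (Ioo (-a) a)) {t : ℝ}
    (ht : t ∈ Ioo (-a) a) :
    d (γ 0) (γ t) ≤ √(g (γ 0) (X (γ 0)) (X (γ 0))) * exp (|C| * a) * |t| := by
  have ha : 0 < a := by linarith [ht.1, ht.2]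
  -- `hdlen` and `hcompat` only apply to curves smooth on all of `ℝ`, so `γ` is reparametrized
  -- by the diffeomorphism `scaledArctan a : ℝ → (-a, a)`
  set σ' : ℝ → ℝ := fun s ↦ 2 * a / π * (1 / (1 + s ^ 2))
  have hσ' : ∀ s, 0 ≤ σ' s := fun s ↦ by positivity
  have hσ'c : Continuous σ' :=
    continuous_const.mul (continuous_const.div (by fun_prop) fun s ↦ by positivity)
  set δ := γ ∘ scaledArctan a
  have hδ : ContMDiff 𝓘(ℝ, ℝ) I ∞ δ :=
    (hγ.contMDiffOn hX isOpen_Ioo).comp_contMDiff (contDiff_scaledArctan a).contMDiff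
      (scaledArctan_mem_Ioo ha)
  have hδ' : ∀ s, mfderiv 𝓘(ℝ, ℝ) I δ s 1 = σ' s • X (δ s) := fun s ↦ by
    rw [(hγ.hasMFDerivAt_comp (hasDerivAt_scaledArctan a s)
      (isOpen_Ioo.mem_nhds (scaledArctan_mem_Ioo ha s))).mfderiv]
    exact one_smul ℝ _
  have hδ0 : δ 0 = γ 0 := by simp [δ]
  have hB : ∀ s, √(g (δ s) (X (δ s)) (X (δ s))) ≤
      √(g (γ 0) (X (γ 0)) (X (γ 0))) * exp (|C| * a) := by
    intro s
    have hexp :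
        |2 * C * scaledArctan a s - 2 * C * scaledArctan a 0| ≤ |C| * a + |C| * a := by
      rw [scaledArctan_zero, mul_zero, sub_zero, abs_mul, abs_mul, abs_two]
      have := (abs_lt.mpr (scaledArctan_mem_Ioo ha s)).le
      nlinarith [abs_nonneg C]
    calc √(g (δ s) (X (δ s)) (X (δ s)))
        ≤ √(g (γ 0) (X (γ 0)) (X (γ 0)) * exp (|C| * a + |C| * a)) := by
          refine sqrt_le_sqrt ((energy_le_mul_exp_of_mfderiv_eq_smul g hgsymm hgnn X covX
            hcompat hC hδ (hasDerivAt_scaledArctan a) hσ' hδ' s).trans ?_)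
          rw [hδ0]
          gcongr
          exact hgnn _ _
      _ = √(g (γ 0) (X (γ 0)) (X (γ 0))) * exp (|C| * a) := by
          rw [exp_add, sqrt_mul' _ (by positivity), sqrt_mul_self (exp_pos _).le]
  have hdist {s₁ s₂ : ℝ} (h : s₁ ≤ s₂) := dist_le_mul_sub_of_mfderiv_eq_smul g d hdlen X hδ
    (hasDerivAt_scaledArctan a) hσ'c hσ' hδ' h fun s _ ↦ hB s
  obtain ⟨s, rfl⟩ := Ioo_subset_range_scaledArctan ha ht
  nth_rw 1 [← hδ0]
  rcases le_total 0 s with hs | hs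
  · refine (hdist hs).trans_eq ?_
    have := monotone_scaledArctan ha.le hs
    rw [scaledArctan_zero] at this ⊢
    rw [sub_zero, abs_of_nonneg this]
  · rw [hdsymm]
    refine (hdist hs).trans_eq ?_
    have := monotone_scaledArctan ha.le hs
    rw [scaledArctan_zero] at this ⊢
    rw [zero_sub, abs_of_nonpos this]

end Riemannian

theorem bounded_covariant_derivative_complete_general
    {n : ℕ} {M : Type*} [TopologicalSpace M] [T2Space M]
    [ChartedSpace (EuclideanSpace ℝ (Fin n)) M]
    [IsManifold (𝓡 n) (⊤ : ℕ∞) M]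
    -- a Riemannian metric g on M
    (g : ∀ q : M, EuclideanSpace ℝ (Fin n) →ₗ[ℝ] EuclideanSpace ℝ (Fin n) →ₗ[ℝ] ℝ)
    (hgsymm : ∀ (q : M) (v w : EuclideanSpace ℝ (Fin n)), g q v w = g q w v)
    (hgpos : ∀ (q : M) (v : EuclideanSpace ℝ (Fin n)), v ≠ 0 → 0 < g q v v)
    -- the Riemannian distance function, with respect to which (M, g) is complete:
    (d : M → M → ℝ)
    (hdsymm : ∀ p q, d p q = d q p)
    -- … the distance is bounded by the g-length of smooth curves …
    (hdlen : ∀ γ : ℝ → M, ContMDiff 𝓘(ℝ, ℝ) (𝓡 n) (⊤ : ℕ∞) γ → ∀ a b : ℝ, a ≤ b →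
      d (γ a) (γ b) ≤ ∫ t in a..b,
        Real.sqrt (g (γ t) (mfderiv 𝓘(ℝ, ℝ) (𝓡 n) γ t (1 : ℝ))
          (mfderiv 𝓘(ℝ, ℝ) (𝓡 n) γ t (1 : ℝ))))
    -- … and closed metric balls are compact (Hopf–Rinow)
    (hHR : ∀ (q : M) (r : ℝ), IsCompact {p : M | d q p ≤ r})
    -- a smooth vector field X on M
    (X : ∀ q : M, TangentSpace (𝓡 n) q)
    (hX : ContMDiff (𝓡 n) (𝓡 n).tangent (⊤ : ℕ∞)
      (fun q => (⟨q, X q⟩ : TangentBundle (𝓡 n) M)))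
    -- the covariant differential ∇X of X, metric-compatible along curves
    (covX : ∀ q : M, EuclideanSpace ℝ (Fin n) →ₗ[ℝ] EuclideanSpace ℝ (Fin n))
    (hcompat : ∀ γ : ℝ → M, ContMDiff 𝓘(ℝ, ℝ) (𝓡 n) (⊤ : ℕ∞) γ → ∀ t : ℝ,
      HasDerivAt (fun s => g (γ s) (X (γ s)) (X (γ s)))
        (2 * g (γ t) (covX (γ t) (mfderiv 𝓘(ℝ, ℝ) (𝓡 n) γ t (1 : ℝ))) (X (γ t))) t)
    -- with uniformly bounded g-operator norm:  C = sup_p ‖∇X(p)‖_g < ∞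
    (C : ℝ)
    (hC : ∀ (q : M) (v : EuclideanSpace ℝ (Fin n)),
      Real.sqrt (g q (covX q v) (covX q v)) ≤ C * Real.sqrt (g q v v)) :
    -- X is complete
    ∀ q₀ : M, ∃ γ : ℝ → M, γ 0 = q₀ ∧
      ∀ t : ℝ, HasMFDerivAt 𝓘(ℝ, ℝ) (𝓡 n) γ t
        (ContinuousLinearMap.smulRight (1 : ℝ →L[ℝ] ℝ) (X (γ t))) := by
  have hgnn : ∀ q v, 0 ≤ g q v v := fun q v ↦
    (eq_or_ne v 0).elim (fun h ↦ by simp [h]) fun h ↦ (hgpos q v h).le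
  intro q₀
  set e₀ := √(g q₀ (X q₀) (X q₀))
  refine exists_isMIntegralCurve_of_forall_mapsTo_isCompact
    (hX.of_le (by exact_mod_cast le_top)) q₀ fun T ↦
      ⟨{p | d q₀ p ≤ e₀ * exp (|C| * T) * T}, hHR _ _, fun γ hγ0 a haT hγ t ht ↦ ?_⟩
  have h := dist_le_of_isMIntegralCurveOn_Ioo g hgsymm hgnn d hdsymm hdlen X hX covX hcompat hC
    hγ ht
  rw [hγ0] at h
  have ht' : |t| ≤ T := (abs_lt.mpr ht).le.trans haT
  refine h.trans ?_
  gcongr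

/-- A smooth vector field `X` with uniformly bounded covariant derivative on a complete
Riemannian manifold `(M, g)` is complete.  The Riemannian metric is encoded as a smooth
family of positive definite symmetric bilinear forms on the tangent spaces; completeness
is encoded through the Riemannian distance `d`, compatible with the `g`-length of smooth
curves and whose closed balls are compact (Hopf–Rinow); the covariant differential
`∇X : T_pM → T_pM` is encoded by `covX`, required to satisfy metric compatibility along
curves, and has uniformly bounded `g`-operator norm `‖∇X(p)‖_g ≤ C`.  The conclusion is
that through every point there is an integral curve of `X` defined on all of `ℝ`. -/
theorem bounded_covariant_derivative_complete
    {n : ℕ} {M : Type*} [TopologicalSpace M] [T2Space M]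
    [ChartedSpace (EuclideanSpace ℝ (Fin n)) M]
    [IsManifold (𝓡 n) (⊤ : ℕ∞) M]
    -- a Riemannian metric g on M
    (g : ∀ q : M, EuclideanSpace ℝ (Fin n) →ₗ[ℝ] EuclideanSpace ℝ (Fin n) →ₗ[ℝ] ℝ)
    (hgsymm : ∀ (q : M) (v w : EuclideanSpace ℝ (Fin n)), g q v w = g q w v)
    (hgpos : ∀ (q : M) (v : EuclideanSpace ℝ (Fin n)), v ≠ 0 → 0 < g q v v)
    (hgsmooth : ∀ v w : EuclideanSpace ℝ (Fin n),
      ContMDiff (𝓡 n) 𝓘(ℝ, ℝ) (⊤ : ℕ∞) (fun q => g q v w))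
    -- the Riemannian distance function, with respect to which (M, g) is complete:
    (d : M → M → ℝ)
    (hd0 : ∀ q, d q q = 0) (hdnn : ∀ p q, 0 ≤ d p q)
    (hdsymm : ∀ p q, d p q = d q p)
    (hdtri : ∀ p q r, d p r ≤ d p q + d q r)
    -- … the distance is bounded by the g-length of smooth curves …
    (hdlen : ∀ γ : ℝ → M, ContMDiff 𝓘(ℝ, ℝ) (𝓡 n) (⊤ : ℕ∞) γ → ∀ a b : ℝ, a ≤ b →
      d (γ a) (γ b) ≤ ∫ t in a..b,
        Real.sqrt (g (γ t) (mfderiv 𝓘(ℝ, ℝ) (𝓡 n) γ t (1 : ℝ))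
          (mfderiv 𝓘(ℝ, ℝ) (𝓡 n) γ t (1 : ℝ))))
    -- … and closed metric balls are compact (Hopf–Rinow)
    (hHR : ∀ (q : M) (r : ℝ), IsCompact {p : M | d q p ≤ r})
    -- a smooth vector field X on M
    (X : ∀ q : M, TangentSpace (𝓡 n) q)
    (hX : ContMDiff (𝓡 n) (𝓡 n).tangent (⊤ : ℕ∞)
      (fun q => (⟨q, X q⟩ : TangentBundle (𝓡 n) M)))
    -- the covariant differential ∇X of X, metric-compatible along curves
    (covX : ∀ q : M, EuclideanSpace ℝ (Fin n) →ₗ[ℝ] EuclideanSpace ℝ (Fin n))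
    (hcompat : ∀ γ : ℝ → M, ContMDiff 𝓘(ℝ, ℝ) (𝓡 n) (⊤ : ℕ∞) γ → ∀ t : ℝ,
      HasDerivAt (fun s => g (γ s) (X (γ s)) (X (γ s)))
        (2 * g (γ t) (covX (γ t) (mfderiv 𝓘(ℝ, ℝ) (𝓡 n) γ t (1 : ℝ))) (X (γ t))) t)
    -- with uniformly bounded g-operator norm:  C = sup_p ‖∇X(p)‖_g < ∞
    (C : ℝ)
    (hC : ∀ (q : M) (v : EuclideanSpace ℝ (Fin n)),
      Real.sqrt (g q (covX q v) (covX q v)) ≤ C * Real.sqrt (g q v v)) :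
    -- X is complete
    ∀ q₀ : M, ∃ γ : ℝ → M, γ 0 = q₀ ∧
      ∀ t : ℝ, HasMFDerivAt 𝓘(ℝ, ℝ) (𝓡 n) γ t
        (ContinuousLinearMap.smulRight (1 : ℝ →L[ℝ] ℝ) (X (γ t))) :=
  bounded_covariant_derivative_complete_general g hgsymm hgpos d hdsymm hdlen hHR X hX covX hcompat
    C hC
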